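/- Let w be the DFS walk on a plane rooted tree, and let u < v be two indices that are consecutive in-indices. Then the subwalk w_u w_{u+1} … w_v is a path in the tree (its vertices are pairwise distinct). -/

import Mathlib

/-!
Consecutive vertices of the DFS walk are joined by a tree arc, and a walk along the arcs of a
rooted forest with no recoil `a b a` is a path. Since parents are unique, such a walk never goes
down and then up, and a walk that only goes down never returns; so a closed walk `x … x` must
leave `x` upwards and come back downwards, both times through the parent of `x`, and between
these two visits of the parent lies a shorter closed walk. The DFS walk recoils only at leaves,
and the index of a leaf is an in-index, so there is no recoil strictly between two consecutive
in-indices.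
-/

/-- A plane rooted tree: a root label together with an ordered list of subtrees. -/
inductive PTree (V : Type) : Type
  | node : V → List (PTree V) → PTree V

namespace PTree

variable {V : Type}

/-- The root label of a plane rooted tree. -/
def root : PTree V → V
  | node v _ => v

/-- The depth-first-search walk: `dfs (node v [t₁,…,tₘ]) = v dfs(t₁) v … v dfs(tₘ) v`. -/
def dfs : PTree V → List V
  | node v ts => v :: (ts.attach.map (fun t => dfs t.1 ++ [v])).flatten
decreasing_by simp only [PTree.node.sizeOf_spec]; have := List.sizeOf_lt_of_mem t.2; omega

/-- The list of vertex labels of a plane rooted tree. -/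
def verts : PTree V → List V
  | node v ts => v :: (ts.attach.map (fun t => verts t.1)).flatten
decreasing_by simp only [PTree.node.sizeOf_spec]; have := List.sizeOf_lt_of_mem t.2; omega

/-- The downward arcs (from each vertex to each of its children). -/
def downArcs : PTree V → List (V × V)
  | node v ts => (ts.map fun t => (v, root t)) ++ (ts.attach.map (fun t => downArcs t.1)).flatten
decreasing_by simp only [PTree.node.sizeOf_spec]; have := List.sizeOf_lt_of_mem t.2; omega

/-- `AscFirst A0 t` : at every vertex, ascending children precede descending children. -/
def AscFirst (A0 : Set (V × V)) : PTree V → Prop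
  | node v ts => ts.Pairwise (fun t₁ t₂ => (root t₂, v) ∈ A0 → (root t₁, v) ∈ A0) ∧
      ∀ t ∈ ts.attach, AscFirst A0 t.1
decreasing_by simp only [PTree.node.sizeOf_spec]; have := List.sizeOf_lt_of_mem t.2; omega

/-- `InIndex t A0 i k` : `k` is the in-index of the vertex `i ≠ r`. -/
def InIndex (t : PTree V) (A0 : Set (V × V)) (i : V) (k : ℕ) : Prop :=
  k < (dfs t).length - 1 ∧ (dfs t)[k]? = some i ∧ i ≠ root t ∧
    ∀ (l : ℕ) (c : V), (dfs t)[l]? = some c → (i, c) ∈ downArcs t →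
      ((c, i) ∈ A0 → l < k) ∧ ((i, c) ∈ A0 → k < l)

open List Relation

section RecoilFreeWalk

variable {α β : Type*}

def _root_.List.RecoilFree (w : List α) : Prop :=
  ∀ a b, ¬ [a, b, a] <:+: w

theorem _root_.List.RecoilFree.infix {w w' : List α} (hw : w.RecoilFree) (h : w' <:+: w) :
    w'.RecoilFree :=
  fun a b hab => hw a b (hab.trans h)

theorem _root_.List.RecoilFree.reverse {w : List α} (hw : w.RecoilFree) : w.reverse.RecoilFree :=
  fun a b hab => hw a b (reverse_infix.1 (by simpa using hab))

variable [Preorder β] {P : α → α → Prop} {r : α → β}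

theorem _root_.List.RecoilFree.isChain_of_rel_head
    (huniq : ∀ ⦃p q c⦄, P p c → P q c → p = q) :
    ∀ {x y : α} {w : List α}, (x :: y :: w).RecoilFree →
      (x :: y :: w).IsChain (SymmGen P) → P x y → (x :: y :: w).IsChain P
  | x, y, [], _, _, hxy => by simpa using hxy
  | x, y, z :: w, hrec, hc, hxy => by
    have hyz : P y z := (isChain_cons_cons.1 hc.tail).1.resolve_right fun hzy => by
      obtain rfl := huniq hzy hxy
      exact hrec z y (prefix_append [z, y, z] w).isInfix
    exact isChain_cons_cons.2
      ⟨hxy, isChain_of_rel_head huniq (hrec.infix (suffix_cons x _).isInfix) hc.tail hyz⟩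

theorem _root_.List.IsChain.not_closed_of_rank (hr : ∀ ⦃p c⦄, P p c → r p < r c) {x : α}
    {s : List α} (hc : (x :: s ++ [x]).IsChain P) : False := by
  have := (isChain_map r).2 (hc.imp hr) |>.pairwise
  exact lt_irrefl (r x) ((pairwise_cons.1 this).1 (r x) (by simp))

theorem _root_.List.RecoilFree.not_closed_of_rel_head (hr : ∀ ⦃p c⦄, P p c → r p < r c)
    (huniq : ∀ ⦃p q c⦄, P p c → P q c → p = q) {x y : α} {s : List α}
    (hrec : (x :: y :: s ++ [x]).RecoilFree) (hc : (x :: y :: s ++ [x]).IsChain (SymmGen P))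
    (hxy : P x y) : False :=
  have hdown : (x :: y :: (s ++ [x])).IsChain P :=
    RecoilFree.isChain_of_rel_head huniq (by simpa using hrec) (by simpa using hc) hxy
  IsChain.not_closed_of_rank hr (s := y :: s) (by simpa using hdown)

theorem _root_.List.RecoilFree.not_closed (hr : ∀ ⦃p c⦄, P p c → r p < r c)
    (huniq : ∀ ⦃p q c⦄, P p c → P q c → p = q) (x : α) (s : List α)
    (hrec : (x :: s ++ [x]).RecoilFree) (hc : (x :: s ++ [x]).IsChain (SymmGen P)) : False := by
  induction hs : s.length using Nat.strong_induction_on generalizing x s with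
  | _ n ih =>
  rcases s with _ | ⟨y, s⟩
  · rcases isChain_pair.1 hc with h | h <;> exact lt_irrefl _ (hr h)
  rcases eq_nil_or_concat' s with rfl | ⟨s, z, rfl⟩
  · exact hrec x y infix_rfl
  rcases (isChain_cons_cons.1 hc).1 with hxy | hyx
  · exact RecoilFree.not_closed_of_rel_head hr huniq hrec hc hxy
  have hzx : SymmGen P z x := isChain_pair.1 (isChain_append.1
    (show ((x :: y :: s) ++ [z, x]).IsChain (SymmGen P) by simpa using hc)).2.1
  rcases hzx with hzx | hxz
  · obtain rfl := huniq hzx hyx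
    have hsub : z :: s ++ [z] <:+: x :: (z :: (s ++ [z])) ++ [x] := ⟨[x], [x], by simp⟩
    exact ih s.length (by simp [← hs]) z s (hrec.infix hsub) (hc.infix hsub) rfl
  · refine RecoilFree.not_closed_of_rel_head (s := s.reverse ++ [y]) hr huniq ?_ ?_ hxz
    · simpa using hrec.reverse
    · simpa using isChain_reverse.2 (hc.imp fun _ _ h => h.symm)

theorem _root_.List.RecoilFree.nodup (hr : ∀ ⦃p c⦄, P p c → r p < r c)
    (huniq : ∀ ⦃p q c⦄, P p c → P q c → p = q) {w : List α} (hrec : w.RecoilFree)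
    (hc : w.IsChain (SymmGen P)) : w.Nodup := by
  induction w with
  | nil => exact nodup_nil
  | cons x w ih =>
    refine nodup_cons.2 ⟨fun hx => ?_, ih (hrec.infix (suffix_cons x w).isInfix) hc.tail⟩
    obtain ⟨s, q, rfl⟩ := append_of_mem hx
    have hpre : x :: s ++ [x] <:+: x :: (s ++ x :: q) := ⟨[], q, by simp⟩
    exact RecoilFree.not_closed hr huniq x s (hrec.infix hpre) (hc.infix hpre)

end RecoilFreeWalk

section ListLemmas

variable {α : Type*}

theorem _root_.List.Nodup.idxOf_lt_idxOf_of_sublist [BEq α] [LawfulBEq α] {l : List α}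
    {a b : α} (hl : l.Nodup) (h : [a, b] <+ l) : l.idxOf a < l.idxOf b := by
  induction l with
  | nil => simp at h
  | cons z l ih =>
    obtain ⟨hz, hl⟩ := nodup_cons.1 hl
    rcases h with _ | ⟨_, h⟩ | ⟨_, h⟩
    · have ha : a ≠ z := fun ha => hz (ha ▸ h.subset mem_cons_self)
      have hb : b ≠ z := fun hb => hz (hb ▸ h.subset (by simp))
      simpa [idxOf_cons_ne _ (Ne.symm ha), idxOf_cons_ne _ (Ne.symm hb)] using ih hl h
    · have hb : b ≠ a := fun hb => hz (hb ▸ h.subset (by simp))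
      simp [idxOf_cons_ne _ (Ne.symm hb)]

theorem _root_.List.exists_getElem?_of_infix_take_drop {w : List α} {u n : ℕ} {a b c : α}
    (h : [a, b, c] <:+: (w.drop u).take n) :
    ∃ k, u < k ∧ k + 1 < u + n ∧ k + 1 < w.length ∧ w[k]? = some b := by
  obtain ⟨j, hj, hget⟩ := infix_iff_getElem?.1 h
  simp only [length_take, length_drop, length_cons, length_nil] at hj
  refine ⟨u + (1 + j), by omega, by omega, by omega, ?_⟩
  simpa [getElem?_take, show 1 + j < n by omega] using hget 1 (by simp)

theorem _root_.List.infix_or_mem_both_of_infix_append {l₁ l₂ : List α} {x y : α}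
    (h : [x, y, x] <:+: l₁ ++ l₂) :
    [x, y, x] <:+: l₁ ∨ [x, y, x] <:+: l₂ ∨ (x ∈ l₁ ∧ x ∈ l₂) := by
  rcases infix_append_iff.1 h with h | h | ⟨s₁, s₂, heq, h₁, h₂⟩
  · exact .inl h
  · exact .inr (.inl h)
  rcases s₁ with _ | ⟨a, _ | ⟨b, _ | ⟨c, _ | ⟨d, s₁⟩⟩⟩⟩ <;> simp at heq
  · exact .inr (.inl (heq ▸ h₂.isInfix))
  · obtain ⟨rfl, rfl⟩ := heq
    exact .inr (.inr ⟨h₁.subset (by simp), h₂.subset (by simp)⟩)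
  · obtain ⟨rfl, rfl, rfl⟩ := heq
    exact .inr (.inr ⟨h₁.subset (by simp), h₂.subset (by simp)⟩)
  · obtain ⟨rfl, rfl, rfl, rfl⟩ := heq
    exact .inl h₁.isInfix

end ListLemmas

@[elab_as_elim]
theorem cons_induction {motive : PTree V → Prop} (nil : ∀ v, motive (node v []))
    (cons : ∀ v t ts, motive t → motive (node v ts) → motive (node v (t :: ts))) :
    ∀ t, motive t
  | node v [] => nil v
  | node v (t :: ts) =>
    cons v t ts (cons_induction nil cons t) (cons_induction nil cons (node v ts))

@[simp] theorem root_node (v : V) (ts : List (PTree V)) : root (node v ts) = v := rfl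

theorem dfs_node_nil (v : V) : dfs (node v []) = [v] := by simp [dfs]

theorem dfs_node_cons (v : V) (t : PTree V) (ts : List (PTree V)) :
    dfs (node v (t :: ts)) = v :: (dfs t ++ dfs (node v ts)) := by
  simp [dfs]

theorem head?_dfs (t : PTree V) : (dfs t).head? = some (root t) := by
  cases t; simp [dfs]

theorem getLast?_dfs (t : PTree V) : (dfs t).getLast? = some (root t) := by
  induction t using cons_induction with
  | nil v => simp [dfs_node_nil]
  | cons v t ts _ ih => rw [dfs_node_cons, ← cons_append, getLast?_append, ih]; simp

theorem verts_node_nil (v : V) : verts (node v []) = [v] := by simp [verts]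

theorem verts_node_cons (v : V) (t : PTree V) (ts : List (PTree V)) :
    verts (node v (t :: ts)) = v :: (verts t ++ (verts (node v ts)).tail) := by
  simp [verts]

theorem verts_eq_root_cons (t : PTree V) : verts t = root t :: (verts t).tail := by
  cases t; simp [verts]

theorem root_mem_verts (t : PTree V) : root t ∈ verts t := by
  rw [verts_eq_root_cons t]; exact mem_cons_self

theorem verts_sublist_node_cons_left (v : V) (t : PTree V) (ts : List (PTree V)) :
    verts t <+ verts (node v (t :: ts)) := by
  rw [verts_node_cons]; exact (sublist_append_left _ _).cons v

theorem verts_sublist_node_cons_right (v : V) (t : PTree V) (ts : List (PTree V)) :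
    verts (node v ts) <+ verts (node v (t :: ts)) := by
  rw [verts_node_cons, verts_eq_root_cons (node v ts)]
  exact (sublist_append_right _ _).cons_cons v

theorem disjoint_verts_of_nodup_node_cons {v : V} {t : PTree V} {ts : List (PTree V)}
    (hnd : (verts (node v (t :: ts))).Nodup) : (verts t).Disjoint (verts (node v ts)) := by
  rw [verts_node_cons, nodup_cons, nodup_append] at hnd
  rw [verts_eq_root_cons (node v ts), root_node, disjoint_cons_right]
  exact ⟨fun hv => hnd.1 (mem_append_left _ hv), fun _ ha hb => hnd.2.2.2 _ ha _ hb rfl⟩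

theorem mem_verts_of_mem_dfs {t : PTree V} {x : V} (h : x ∈ dfs t) : x ∈ verts t := by
  induction t using cons_induction with
  | nil v => simpa [dfs_node_nil, verts_node_nil] using h
  | cons v t ts iht ihts =>
    rw [dfs_node_cons, mem_cons, mem_append] at h
    rcases h with rfl | h | h
    · exact root_mem_verts (node x (t :: ts))
    · exact (verts_sublist_node_cons_left v t ts).subset (iht h)
    · exact (verts_sublist_node_cons_right v t ts).subset (ihts h)

theorem downArcs_node_nil (v : V) : downArcs (node v []) = [] := by simp [downArcs]

theorem downArcs_node_cons_perm (v : V) (t : PTree V) (ts : List (PTree V)) :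
    downArcs (node v (t :: ts)) ~ (v, root t) :: (downArcs t ++ downArcs (node v ts)) := by
  simp only [downArcs, map_cons, attach_cons, flatten_cons, List.map_map]
  simpa using perm_append_comm_assoc _ _ _

theorem mem_downArcs_node_cons {v : V} {t : PTree V} {ts : List (PTree V)} {p : V × V} :
    p ∈ downArcs (node v (t :: ts)) ↔
      p = (v, root t) ∨ p ∈ downArcs t ∨ p ∈ downArcs (node v ts) := by
  simp [(downArcs_node_cons_perm v t ts).mem_iff]

theorem downArcs_eq_nil_of_dfs_eq_singleton {t : PTree V} {x : V} (h : dfs t = [x]) :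
    downArcs t = [] := by
  rcases t with ⟨w, _ | ⟨c, cs⟩⟩
  · exact downArcs_node_nil w
  · have := head?_dfs c
    simp_all [dfs_node_cons]

theorem root_cons_map_snd_downArcs_perm (t : PTree V) :
    root t :: (downArcs t).map Prod.snd ~ verts t := by
  induction t using cons_induction with
  | nil v => simp [downArcs_node_nil, verts_node_nil]
  | cons v t ts iht ihts =>
    rw [verts_eq_root_cons (node v ts), root_node, perm_cons] at ihts
    calc root (node v (t :: ts)) :: (downArcs (node v (t :: ts))).map Prod.snd
        ~ v :: ((root t :: (downArcs t).map Prod.snd) ++ (downArcs (node v ts)).map Prod.snd) := by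
          simpa using (downArcs_node_cons_perm v t ts).map Prod.snd
      _ ~ verts (node v (t :: ts)) := by
          rw [verts_node_cons]; exact (iht.append ihts).cons v

theorem eq_of_mem_downArcs {t : PTree V} (hnd : (verts t).Nodup) ⦃p q c : V⦄
    (hp : (p, c) ∈ downArcs t) (hq : (q, c) ∈ downArcs t) : p = q := by
  have hsnd : ((downArcs t).map Prod.snd).Nodup :=
    (nodup_cons.1 ((root_cons_map_snd_downArcs_perm t).nodup_iff.2 hnd)).2
  simpa using inj_on_of_nodup_map hsnd hp hq rfl

theorem sublist_verts_of_mem_downArcs {t : PTree V} {p c : V} (h : (p, c) ∈ downArcs t) :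
    [p, c] <+ verts t := by
  induction t using cons_induction with
  | nil v => simp [downArcs_node_nil] at h
  | cons v t ts iht ihts =>
    rcases mem_downArcs_node_cons.1 h with h | h | h
    · obtain ⟨rfl, rfl⟩ := Prod.mk.inj h
      rw [verts_node_cons]
      exact (singleton_sublist.2 (mem_append_left _ (root_mem_verts t))).cons_cons p
    · exact (iht h).trans (verts_sublist_node_cons_left v t ts)
    · exact (ihts h).trans (verts_sublist_node_cons_right v t ts)

theorem fst_mem_verts_of_mem_downArcs {t : PTree V} {p c : V} (h : (p, c) ∈ downArcs t) :
    p ∈ verts t :=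
  (sublist_verts_of_mem_downArcs h).subset mem_cons_self

theorem isChain_dfs (t : PTree V) :
    (dfs t).IsChain (SymmGen fun p c => (p, c) ∈ downArcs t) := by
  induction t using cons_induction with
  | nil v => simp [dfs_node_nil]
  | cons v t ts iht ihts =>
    have harc : (v, root t) ∈ downArcs (node v (t :: ts)) := mem_downArcs_node_cons.2 (.inl rfl)
    have hl : ∀ {p}, p ∈ downArcs t → p ∈ downArcs (node v (t :: ts)) :=
      fun h => mem_downArcs_node_cons.2 (.inr (.inl h))
    have hr : ∀ {p}, p ∈ downArcs (node v ts) → p ∈ downArcs (node v (t :: ts)) :=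
      fun h => mem_downArcs_node_cons.2 (.inr (.inr h))
    rw [dfs_node_cons]
    refine ((iht.imp fun _ _ => Or.imp hl hl).append (ihts.imp fun _ _ => Or.imp hr hr) ?_).cons ?_
    · simpa [getLast?_dfs, head?_dfs, SymmGen] using Or.inr harc
    · simpa [head?_append, head?_dfs, SymmGen] using Or.inl harc

theorem notMem_downArcs_node_cons_of_mem_left {v y : V} {t : PTree V} {ts : List (PTree V)}
    (hnd : (verts (node v (t :: ts))).Nodup) (hy : y ∈ verts t)
    (hc : ∀ c, (y, c) ∉ downArcs t) (c : V) : (y, c) ∉ downArcs (node v (t :: ts)) := by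
  intro h
  rcases mem_downArcs_node_cons.1 h with h | h | h
  · rw [(Prod.mk.inj h).1] at hy
    exact disjoint_verts_of_nodup_node_cons hnd hy (root_mem_verts (node v ts))
  · exact hc c h
  · exact disjoint_verts_of_nodup_node_cons hnd hy (fst_mem_verts_of_mem_downArcs h)

theorem notMem_downArcs_node_cons_of_mem_right {v y : V} {t : PTree V} {ts : List (PTree V)}
    (hnd : (verts (node v (t :: ts))).Nodup) (hy : y ∈ verts (node v ts)) (hyv : y ≠ v)
    (hc : ∀ c, (y, c) ∉ downArcs (node v ts)) (c : V) :
    (y, c) ∉ downArcs (node v (t :: ts)) := by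
  intro h
  rcases mem_downArcs_node_cons.1 h with h | h | h
  · exact hyv (Prod.mk.inj h).1
  · exact disjoint_verts_of_nodup_node_cons hnd (fst_mem_verts_of_mem_downArcs h) hy
  · exact hc c h

theorem dfs_eq_singleton_of_prefix_dfs_append {t : PTree V} {y z : V} {l : List V}
    (h : [y, z] <+: dfs t ++ l) (hz : z ∉ dfs t) : dfs t = [y] := by
  obtain ⟨A, hA⟩ := head?_eq_some_iff.1 (head?_dfs t)
  rw [hA, cons_append, cons_prefix_cons] at h
  rcases A with _ | ⟨a, A⟩
  · rw [hA, h.1]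
  · obtain ⟨rfl, -⟩ := cons_prefix_cons.1 h.2
    exact (hz (by simp [hA])).elim

theorem ne_root_and_childless_of_infix_dfs {t : PTree V} (hnd : (verts t).Nodup) {x y : V}
    (h : [x, y, x] <:+: dfs t) : y ≠ root t ∧ ∀ c, (y, c) ∉ downArcs t := by
  induction t using cons_induction with
  | nil v => simpa [dfs_node_nil] using h.length_le
  | cons v t ts iht ihts =>
    have hdisj := disjoint_verts_of_nodup_node_cons hnd
    have hvt : v ∉ verts t := fun hv => hdisj hv (root_mem_verts (node v ts))
    have of_left : y ∈ verts t → (∀ c, (y, c) ∉ downArcs t) →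
        y ≠ v ∧ ∀ c, (y, c) ∉ downArcs (node v (t :: ts)) := fun hy hc =>
      ⟨fun hyv => hvt (hyv ▸ hy), notMem_downArcs_node_cons_of_mem_left hnd hy hc⟩
    have mem_of_infix {s : PTree V} : [x, y, x] <:+: dfs s → y ∈ verts s := fun h =>
      mem_verts_of_mem_dfs (h.subset (by simp))
    rw [dfs_node_cons] at h
    rcases infix_cons_iff.1 h with hpre | h
    · obtain ⟨rfl, hpre⟩ := cons_prefix_cons.1 hpre
      have hleaf :=
        dfs_eq_singleton_of_prefix_dfs_append hpre fun hx => hvt (mem_verts_of_mem_dfs hx)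
      exact of_left (mem_verts_of_mem_dfs (by simp [hleaf]))
        (by simp [downArcs_eq_nil_of_dfs_eq_singleton hleaf])
    rcases infix_or_mem_both_of_infix_append h with h | h | ⟨hxt, hxts⟩
    · exact of_left (mem_of_infix h) (iht ((verts_sublist_node_cons_left v t ts).nodup hnd) h).2
    · obtain ⟨hyv, hc⟩ := ihts ((verts_sublist_node_cons_right v t ts).nodup hnd) h
      exact ⟨hyv, notMem_downArcs_node_cons_of_mem_right hnd (mem_of_infix h) hyv hc⟩
    · exact (hdisj (mem_verts_of_mem_dfs hxt) (mem_verts_of_mem_dfs hxts)).elim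

theorem inIndex_of_childless {t : PTree V} {A0 : Set (V × V)} {y : V} {k : ℕ}
    (hk : k + 1 < (dfs t).length) (hy : (dfs t)[k]? = some y) (hroot : y ≠ root t)
    (hc : ∀ c, (y, c) ∉ downArcs t) : InIndex t A0 y k :=
  ⟨by omega, hy, hroot, fun _ c _ hyc => absurd hyc (hc c)⟩

theorem subwalk_between_consecutive_in_indices_is_path_general (t : PTree V)
    (A0 : Set (V × V))
    (hnd : (verts t).Nodup)
    (u v : ℕ)
    (hcons : ∀ l : ℕ, u < l → l < v → ¬ ∃ i, InIndex t A0 i l) :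
    (((dfs t).drop u).take (v - u + 1)).Nodup := by
  classical
  have hsub : ((dfs t).drop u).take (v - u + 1) <:+: dfs t :=
    (take_prefix _ _).isInfix.trans (drop_suffix _ _).isInfix
  have hrec : (((dfs t).drop u).take (v - u + 1)).RecoilFree := fun x y h => by
    obtain ⟨l, hul, hlv, hlen, hl⟩ := exists_getElem?_of_infix_take_drop h
    obtain ⟨hroot, hc⟩ := ne_root_and_childless_of_infix_dfs hnd (h.trans hsub)
    exact hcons l hul (by omega) ⟨y, inIndex_of_childless hlen hl hroot hc⟩
  -- The preorder position of a vertex ranks it strictly above its parent.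
  exact hrec.nodup (r := (verts t).idxOf)
    (fun _ _ h => hnd.idxOf_lt_idxOf_of_sublist (sublist_verts_of_mem_downArcs h))
    (eq_of_mem_downArcs hnd) ((isChain_dfs t).infix hsub)

/-- The subwalk of the DFS walk between two consecutive in-indices `u < v` is a path
in the tree: its vertices are pairwise distinct. -/
theorem subwalk_between_consecutive_in_indices_is_path (t : PTree V)
    (A0 : Set (V × V))
    (hnd : (verts t).Nodup)
    (hor : ∀ i j : V, (i, j) ∈ downArcs t → ((i, j) ∈ A0 ↔ (j, i) ∉ A0))
    (hasc : AscFirst A0 t)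
    (u v : ℕ) (huv : u < v)
    (hu : ∃ i, InIndex t A0 i u) (hv : ∃ j, InIndex t A0 j v)
    (hcons : ∀ l : ℕ, u < l → l < v → ¬ ∃ i, InIndex t A0 i l) :
    (((dfs t).drop u).take (v - u + 1)).Nodup :=
  subwalk_between_consecutive_in_indices_is_path_general t A0 hnd u v hcons

end PTree
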